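/- In any sequence of t insert operations applied to a 2-3 tree that initially has n̄_i nodes at height i, with t > n̄_i, the number of node splits occurring at height i is at most n̄_i + ⌈(t − n̄_i)/2^i⌉, assuming (a) each of the initially present height-i nodes can split at most once before being 'refreshed', and (b) after the initial splits, each split at height i requires 2^i insertions since the previous split at that height. -/

import Mathlib

/-- `(a + p - 1) / p` is `⌈a / p⌉`. -/
theorem Nat.lt_add_pred_div_of_mul_lt {a k p : ℕ} (hp : 0 < p) (h : k * p < a) :
    k < (a + p - 1) / p := by
  rw [Nat.lt_iff_add_one_le, Nat.le_div_iff_mul_le hp, add_mul, one_mul]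
  omega

/-- Only the last split matters: it is the `(s - nbar)`-th late one, so it happens no earlier
than `nbar + (s - 1 - nbar) * 2 ^ i`, and before `t`. -/
theorem stmt_8_general (t nbar i s : ℕ) (f : Fin s → ℕ)
    (hlt : ∀ j, f j < t)
    (hlate : ∀ j : Fin s, nbar ≤ (j : ℕ) → nbar + ((j : ℕ) - nbar) * 2 ^ i ≤ f j) :
    s ≤ nbar + (t - nbar + 2 ^ i - 1) / 2 ^ i := by
  rcases le_or_gt s nbar with hs | hs
  · exact le_add_right hs
  · let last : Fin s := ⟨s - 1, by omega⟩
    have hlast : nbar + (s - 1 - nbar) * 2 ^ i < t :=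
      (hlate last (Nat.le_sub_one_of_lt hs)).trans_lt (hlt last)
    have := Nat.lt_add_pred_div_of_mul_lt (a := t - nbar) (k := s - 1 - nbar)
      (Nat.two_pow_pos i) (by omega)
    omega

/-- Lemma 3 (split-gro): in a sequence of t > n̄ᵢ operations, where the s node splits at
height i occur at strictly increasing times f j < t, the initially present n̄ᵢ nodes each
split at most once, and each subsequent split (index j ≥ n̄ᵢ) requires 2^i insertions
since the previous one, the number of splits satisfies s ≤ n̄ᵢ + ⌈(t − n̄ᵢ)/2^i⌉. -/
theorem stmt_8 (t nbar i s : ℕ) (ht : nbar < t) (f : Fin s → ℕ)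
    (hmono : StrictMono f) (hlt : ∀ j, f j < t)
    (hlate : ∀ j : Fin s, nbar ≤ (j : ℕ) → nbar + ((j : ℕ) - nbar) * 2 ^ i ≤ f j) :
    s ≤ nbar + (t - nbar + 2 ^ i - 1) / 2 ^ i :=
  stmt_8_general t nbar i s f hlt hlate
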